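/- arXiv:1805.11179 — 2 statements merged into one kernel-verified Lean document; each statement's English description precedes it below -/
import Mathlib

section
/- Let g : [p̲, p̄] → ℝ be differentiable with derivative g'(p) ∈ [S̲, S̄] for all p ∈ [p̲, p̄], where p̲ ≤ p̄, and suppose the interval center (S̲ + S̄)/2 ≥ 0. Set d = min(0, S̲). Then for all p ∈ [p̲, p̄], g(p) ∈ [g(p̲) - d(p̲ - p̄), g(p̄) + d(p̲ - p̄)]. -/
open Set

theorem mul_sub_le_sub_of_hasDerivAt_of_le {a b d : ℝ} {f f' : ℝ → ℝ}
    (hf : ∀ x ∈ Icc a b, HasDerivAt f (f' x) x) (hd : ∀ x ∈ Icc a b, d ≤ f' x)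
    {x y : ℝ} (hx : x ∈ Icc a b) (hy : y ∈ Icc a b) (hxy : x ≤ y) :
    d * (y - x) ≤ f y - f x := by
  have hcont : ContinuousOn f (Icc a b) := fun z hz => (hf z hz).continuousAt.continuousWithinAt
  refine (convex_Icc a b).mul_sub_le_image_sub_of_le_deriv hcont ?_ ?_ x hx y hy hxy
  all_goals rw [interior_Icc]
  · exact fun z hz => (hf z (Ioo_subset_Icc_self hz)).differentiableAt.differentiableWithinAt
  · exact fun z hz => (hf z (Ioo_subset_Icc_self hz)).deriv ▸ hd z (Ioo_subset_Icc_self hz)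

theorem stmt_6_general (plo phi Slo Shi : ℝ) (hp : plo ≤ phi)
    (g g' : ℝ → ℝ)
    (hderiv : ∀ p ∈ Set.Icc plo phi, HasDerivAt g (g' p) p)
    (hbound : ∀ p ∈ Set.Icc plo phi, g' p ∈ Set.Icc Slo Shi) :
    ∀ p ∈ Set.Icc plo phi,
      g p ∈ Set.Icc (g plo - min 0 Slo * (plo - phi)) (g phi + min 0 Slo * (plo - phi)) := by
  intro p hpI
  set d := min 0 Slo
  have hd : ∀ x ∈ Icc plo phi, d ≤ g' x := fun x hx => (min_le_right _ _).trans (hbound x hx).1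
  have hlo := mul_sub_le_sub_of_hasDerivAt_of_le hderiv hd (left_mem_Icc.2 hp) hpI hpI.1
  have hhi := mul_sub_le_sub_of_hasDerivAt_of_le hderiv hd hpI (right_mem_Icc.2 hp) hpI.2
  -- d ≤ 0, so the slope bound over the whole interval is weaker than over either part
  have hwhole_lo : d * (phi - plo) ≤ d * (p - plo) :=
    mul_le_mul_of_nonpos_left (by linarith [hpI.2]) (min_le_left _ _)
  have hwhole_hi : d * (phi - plo) ≤ d * (phi - p) :=
    mul_le_mul_of_nonpos_left (by linarith [hpI.1]) (min_le_left _ _)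
  constructor <;> linarith

theorem stmt_6 (plo phi Slo Shi : ℝ) (hp : plo ≤ phi)
    (g g' : ℝ → ℝ)
    (hderiv : ∀ p ∈ Set.Icc plo phi, HasDerivAt g (g' p) p)
    (hbound : ∀ p ∈ Set.Icc plo phi, g' p ∈ Set.Icc Slo Shi)
    (hcenter : 0 ≤ (Slo + Shi) / 2) :
    ∀ p ∈ Set.Icc plo phi,
      g p ∈ Set.Icc (g plo - min 0 Slo * (plo - phi)) (g phi + min 0 Slo * (plo - phi)) :=
  stmt_6_general plo phi Slo Shi hp g g' hderiv hbound
end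

section
/- Let g : K → ℝ be differentiable on the box K = [p̲, p̄] ⊆ ℝᵐ, and suppose for each j ∈ {1,…,m} the partial derivative ∂g/∂pⱼ takes values in [S̲ⱼ, S̄ⱼ] on K. For each j, if (S̲ⱼ + S̄ⱼ)/2 ≥ 0 set π̲ⱼ = p̲ⱼ, π̄ⱼ = p̄ⱼ, dⱼ = min(0, S̲ⱼ); otherwise set π̲ⱼ = p̄ⱼ, π̄ⱼ = p̲ⱼ, dⱼ = max(0, S̄ⱼ). Then for every p ∈ K: g(π̲) - Σⱼ dⱼ(π̲ⱼ - π̄ⱼ) ≤ g(p) ≤ g(π̄) + Σⱼ dⱼ(π̲ⱼ - π̄ⱼ). -/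
lemma clm_sum (m : ℕ) (L : (Fin m → ℝ) →L[ℝ] ℝ) (v : Fin m → ℝ) :
    L v = ∑ j, L (Pi.single j 1) * (v j) := by
  have hv : v = ∑ j, (v j) • (Pi.single j (1:ℝ) : Fin m → ℝ) := by
    funext k
    simp [Finset.sum_apply, Pi.single_apply]
  conv_lhs => rw [hv]
  rw [map_sum]
  congr 1; funext j
  rw [map_smul]; simp [mul_comm]

lemma mvt_box (m : ℕ) (plo phi : Fin m → ℝ)
    (g : (Fin m → ℝ) → ℝ)
    (D : (Fin m → ℝ) → ((Fin m → ℝ) →L[ℝ] ℝ))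
    (hderiv : ∀ p ∈ Set.Icc plo phi, HasFDerivAt g (D p) p)
    (x : Fin m → ℝ) (hx : x ∈ Set.Icc plo phi)
    (y : Fin m → ℝ) (hy : y ∈ Set.Icc plo phi) :
    ∃ ξ ∈ Set.Icc plo phi, g x - g y = ∑ j, D ξ (Pi.single j 1) * (x j - y j) := by
  have hpt : ∀ t ∈ Set.Icc (0:ℝ) 1, y + t • (x - y) ∈ Set.Icc plo phi := by
    intro t ht
    constructor <;> intro j <;>
      simp only [Pi.add_apply, Pi.smul_apply, Pi.sub_apply, smul_eq_mul] <;>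
      nlinarith [hx.1 j, hx.2 j, hy.1 j, hy.2 j, ht.1, ht.2]
  set h : ℝ → ℝ := fun t => g (y + t • (x - y)) with hh
  have hd : ∀ t ∈ Set.Icc (0:ℝ) 1,
      HasDerivAt h (D (y + t • (x - y)) (x - y)) t := by
    intro t ht
    have hline : HasDerivAt (fun t : ℝ => y + t • (x - y)) (x - y) t := by
      simpa using ((hasDerivAt_id t).smul_const (x - y)).const_add y
    exact (hderiv _ (hpt t ht)).comp_hasDerivAt t hline
  obtain ⟨c, hc, hceq⟩ := exists_hasDerivAt_eq_slope h
      (fun t => D (y + t • (x - y)) (x - y)) (by norm_num : (0:ℝ) < 1)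
      (fun t ht => (hd t ht).continuousAt.continuousWithinAt)
      (fun t ht => hd t ⟨le_of_lt ht.1, le_of_lt ht.2⟩)
  refine ⟨y + c • (x - y), hpt c ⟨le_of_lt hc.1, le_of_lt hc.2⟩, ?_⟩
  have hxy : (fun j => x j - y j) = x - y := rfl
  rw [← clm_sum, hxy, hceq]
  have h1 : h 1 = g x := by simp [hh]
  have h0 : h 0 = g y := by simp [hh]
  rw [h1, h0]; ring

theorem stmt_10 (m : ℕ) (plo phi : Fin m → ℝ) (hp : plo ≤ phi)
    (g : (Fin m → ℝ) → ℝ)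
    (D : (Fin m → ℝ) → ((Fin m → ℝ) →L[ℝ] ℝ))
    (Slo Shi : Fin m → ℝ)
    (hderiv : ∀ p ∈ Set.Icc plo phi, HasFDerivAt g (D p) p)
    (hbound : ∀ p ∈ Set.Icc plo phi, ∀ j : Fin m,
      D p (Pi.single j 1) ∈ Set.Icc (Slo j) (Shi j))
    (πlo πhi : Fin m → ℝ) (d : Fin m → ℝ)
    (hdef : ∀ j : Fin m,
      (0 ≤ (Slo j + Shi j) / 2 →
        πlo j = plo j ∧ πhi j = phi j ∧ d j = min 0 (Slo j)) ∧
      ((Slo j + Shi j) / 2 < 0 →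
        πlo j = phi j ∧ πhi j = plo j ∧ d j = max 0 (Shi j))) :
    ∀ p ∈ Set.Icc plo phi,
      g πlo - ∑ j, d j * (πlo j - πhi j) ≤ g p ∧
      g p ≤ g πhi + ∑ j, d j * (πlo j - πhi j) := by
  intro p hpmem
  have hπlo : πlo ∈ Set.Icc plo phi := by
    constructor <;> intro j <;>
    · rcases le_or_gt 0 ((Slo j + Shi j) / 2) with hc | hc
      · first | (rw [((hdef j).1 hc).1]; exact hp j) | rw [((hdef j).1 hc).1]
      · first | (rw [((hdef j).2 hc).1]; exact hp j) | rw [((hdef j).2 hc).1]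
  have hπhi : πhi ∈ Set.Icc plo phi := by
    constructor <;> intro j <;>
    · rcases le_or_gt 0 ((Slo j + Shi j) / 2) with hc | hc
      · first | (rw [((hdef j).1 hc).2.1]; exact hp j) | rw [((hdef j).1 hc).2.1]
      · first | (rw [((hdef j).2 hc).2.1]; exact hp j) | rw [((hdef j).2 hc).2.1]
  -- key per-coordinate bound
  have key : ∀ (ξ : Fin m → ℝ), ξ ∈ Set.Icc plo phi → ∀ j (t : ℝ),
      ((0 ≤ (Slo j + Shi j) / 2 → plo j - phi j ≤ t ∧ t ≤ 0) ∧
       ((Slo j + Shi j) / 2 < 0 → 0 ≤ t ∧ t ≤ phi j - plo j)) →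
      D ξ (Pi.single j 1) * t ≤ d j * (πlo j - πhi j) := by
    intro ξ hξ j t ht
    obtain ⟨hb1, hb2⟩ := hbound ξ hξ j
    rcases le_or_gt 0 ((Slo j + Shi j) / 2) with hc | hc
    · obtain ⟨e1, e2, e3⟩ := (hdef j).1 hc
      obtain ⟨t1, t2⟩ := ht.1 hc
      rw [e1, e2, e3]
      have h1 : min 0 (Slo j) ≤ Slo j := min_le_right _ _
      have h2 : min 0 (Slo j) ≤ 0 := min_le_left _ _
      nlinarith
    · obtain ⟨e1, e2, e3⟩ := (hdef j).2 hc
      obtain ⟨t1, t2⟩ := ht.2 hc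
      rw [e1, e2, e3]
      have h1 : Shi j ≤ max 0 (Shi j) := le_max_right _ _
      have h2 : (0:ℝ) ≤ max 0 (Shi j) := le_max_left _ _
      nlinarith
  constructor
  · obtain ⟨ξ, hξ, heq⟩ := mvt_box m plo phi g D hderiv πlo hπlo p hpmem
    have hsum : ∑ j, D ξ (Pi.single j 1) * (πlo j - p j) ≤ ∑ j, d j * (πlo j - πhi j) := by
      apply Finset.sum_le_sum
      intro j _
      apply key ξ hξ j
      constructor
      · intro hc
        obtain ⟨e1, _, _⟩ := (hdef j).1 hc
        rw [e1]
        exact ⟨by linarith [hpmem.2 j], by linarith [hpmem.1 j]⟩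
      · intro hc
        obtain ⟨e1, _, _⟩ := (hdef j).2 hc
        rw [e1]
        exact ⟨by linarith [hpmem.2 j], by linarith [hpmem.1 j]⟩
    linarith [heq ▸ hsum]
  · obtain ⟨ξ, hξ, heq⟩ := mvt_box m plo phi g D hderiv p hpmem πhi hπhi
    have hsum : ∑ j, D ξ (Pi.single j 1) * (p j - πhi j) ≤ ∑ j, d j * (πlo j - πhi j) := by
      apply Finset.sum_le_sum
      intro j _
      apply key ξ hξ j
      constructor
      · intro hc
        obtain ⟨_, e2, _⟩ := (hdef j).1 hc
        rw [e2]
        exact ⟨by linarith [hpmem.1 j], by linarith [hpmem.2 j]⟩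
      · intro hc
        obtain ⟨_, e2, _⟩ := (hdef j).2 hc
        rw [e2]
        exact ⟨by linarith [hpmem.1 j], by linarith [hpmem.2 j]⟩
    linarith [heq ▸ hsum]
end
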